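/- Let (Ψ_h)_{h} be random continuous functions on ℝ and Ψ a random continuous function on ℝ with an almost surely unique minimizer ξ⁰. Let M_h denote the set of minimizers of Ψ_h. Suppose (a) for every bounded open interval A with P[ξ⁰ ∈ ∂A] = 0, P[M_h ⊆ A] → P[ξ⁰ ∈ A] as h ↓ 0, and (b) for every bounded open subinterval A of a bounded interval A_d, P[inf_{A} Ψ_h = inf_{A^c} Ψ_h] → P[inf_{A} Ψ = inf_{A^c} Ψ] = 0, and (c) lim_{d→∞} sup_h P[M_h ⊄ A_d] = 0 where A_d is the interval of length d centered at the origin. Then for every ε > 0, P[sup_{s₁, s₂ ∈ M_h} |s₁ - s₂| > ε] → 0 as h ↓ 0, i.e., the diameter of the set of minimizers converges to zero in probability. -/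
import Mathlib


open MeasureTheory Filter

/-- The (random) set of global minimizers of a function. -/
def minimizerSet (f : ℝ → ℝ) : Set ℝ := {s | ∀ t, f s ≤ f t}

lemma sInf_eq_of_min_mem {f : ℝ → ℝ} {s₁ s₂ : ℝ} (h1 : s₁ ∈ minimizerSet f)
    (h2 : s₂ ∈ minimizerSet f) {A : Set ℝ} (hs1 : s₁ ∈ A) (hs2 : s₂ ∉ A) :
    sInf (f '' A) = sInf (f '' Aᶜ) := by
  have hm : f s₁ = f s₂ := le_antisymm (h1 s₂) (h2 s₁)
  have e1 : sInf (f '' A) = f s₁ :=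
    IsLeast.csInf_eq ⟨⟨s₁, hs1, rfl⟩, by rintro y ⟨t, _, rfl⟩; exact h1 t⟩
  have e2 : sInf (f '' Aᶜ) = f s₂ :=
    IsLeast.csInf_eq ⟨⟨s₂, hs2, rfl⟩, by rintro y ⟨t, _, rfl⟩; exact h2 t⟩
  rw [e1, e2, hm]

lemma cover_lemma {d ε x : ℝ} (hε : 0 < ε) (hx : x ∈ Set.Ioo (-(d/2)) (d/2)) :
    ∃ i : ℕ, i ≤ ⌈d / (ε/2)⌉₊ ∧
      x ∈ Set.Ioo (-(d/2) + i*(ε/2) - ε/2) (-(d/2) + i*(ε/2) + ε/2) := by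
  obtain ⟨hx1, hx2⟩ := hx
  have hε2 : 0 < ε/2 := by linarith
  set i := ⌊(x + d/2) / (ε/2)⌋₊ with hi
  have hpos : 0 ≤ x + d/2 := by linarith
  have hfl : (i:ℝ) * (ε/2) ≤ x + d/2 := by
    have h1 := Nat.floor_le (div_nonneg hpos hε2.le)
    calc (i:ℝ) * (ε/2) ≤ ((x + d/2)/(ε/2)) * (ε/2) :=
          mul_le_mul_of_nonneg_right h1 hε2.le
      _ = x + d/2 := div_mul_cancel₀ _ hε2.ne'
  have hfu : x + d/2 < ((i:ℝ)+1) * (ε/2) := by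
    have h1 := Nat.lt_floor_add_one ((x + d/2)/(ε/2))
    calc x + d/2 = ((x + d/2)/(ε/2)) * (ε/2) := (div_mul_cancel₀ _ hε2.ne').symm
      _ < ((i:ℝ)+1) * (ε/2) := by
          apply mul_lt_mul_of_pos_right ?_ hε2
          exact_mod_cast h1
  refine ⟨i, ?_, ?_, ?_⟩
  · calc i ≤ ⌊d / (ε/2)⌋₊ := Nat.floor_le_floor (by gcongr <;> linarith)
      _ ≤ ⌈d / (ε/2)⌉₊ := Nat.floor_le_ceil _
  · linarith
  · nlinarith [hfu]

theorem diameter_of_minimizer_set_tendsto_zero {Ω : Type*} [MeasurableSpace Ω]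
    (μ : Measure Ω) [IsProbabilityMeasure μ]
    (Ψ : ℝ → Ω → ℝ → ℝ) (Ψlim : Ω → ℝ → ℝ) (ξ : Ω → ℝ)
    (hΨcont : ∀ h ω, Continuous (Ψ h ω))
    (hΨlimcont : ∀ ω, Continuous (Ψlim ω))
    (hunique : ∀ᵐ ω ∂μ, ∀ s, s ≠ ξ ω → Ψlim ω (ξ ω) < Ψlim ω s)
    -- (a) for bounded open intervals whose boundary is not charged by ξ,
    -- P[M_h ⊆ A] → P[ξ ∈ A]
    (ha : ∀ a b : ℝ, a < b → μ {ω | ξ ω ∈ frontier (Set.Ioo a b)} = 0 →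
      Tendsto (fun h => (μ {ω | minimizerSet (Ψ h ω) ⊆ Set.Ioo a b}).toReal)
        (nhdsWithin 0 (Set.Ioi 0))
        (nhds ((μ {ω | ξ ω ∈ Set.Ioo a b}).toReal)))
    -- (b) P[inf_A Ψ_h = inf_{A^c} Ψ_h] → P[inf_A Ψ = inf_{A^c} Ψ] = 0
    (hb : ∀ a b : ℝ, a < b →
      Tendsto
        (fun h =>
          (μ {ω | sInf (Ψ h ω '' Set.Ioo a b) = sInf (Ψ h ω '' (Set.Ioo a b)ᶜ)}).toReal)
        (nhdsWithin 0 (Set.Ioi 0))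
        (nhds ((μ {ω | sInf (Ψlim ω '' Set.Ioo a b)
          = sInf (Ψlim ω '' (Set.Ioo a b)ᶜ)}).toReal)) ∧
      μ {ω | sInf (Ψlim ω '' Set.Ioo a b) = sInf (Ψlim ω '' (Set.Ioo a b)ᶜ)} = 0)
    -- (c) lim_{d→∞} sup_h P[M_h ⊄ A_d] = 0
    (hc : Tendsto
        (fun d : ℝ =>
          ⨆ h ∈ Set.Ioi (0 : ℝ),
            (μ {ω | ¬ minimizerSet (Ψ h ω) ⊆ Set.Ioo (-(d / 2)) (d / 2)}).toReal)
        atTop (nhds 0)) :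
    ∀ ε : ℝ, 0 < ε →
      Tendsto
        (fun h =>
          (μ {ω | ∃ s₁ ∈ minimizerSet (Ψ h ω), ∃ s₂ ∈ minimizerSet (Ψ h ω),
            ε < |s₁ - s₂|}).toReal)
        (nhdsWithin 0 (Set.Ioi 0)) (nhds 0) := by
  intro ε hε
  have htoReal_le_one : ∀ s : Set Ω, (μ s).toReal ≤ 1 := by
    intro s
    have := ENNReal.toReal_mono ENNReal.one_ne_top (prob_le_one (μ := μ) (s := s))
    simpa using this
  rw [Metric.tendsto_nhds]
  intro δ hδ
  -- choose d
  obtain ⟨d, hd⟩ := (hc.eventually_lt_const (by linarith : (0:ℝ) < δ/2)).exists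
  set N := ⌈d / (ε/2)⌉₊ with hN
  set a : ℕ → ℝ := fun i => -(d/2) + i*(ε/2) - ε/2 with ha'
  set b : ℕ → ℝ := fun i => -(d/2) + i*(ε/2) + ε/2 with hb'
  have hab : ∀ i, a i < b i := fun i => by simp only [ha', hb']; linarith
  -- the sum of the bad-interval probabilities tends to 0
  have hsum : Tendsto (fun h => ∑ i ∈ Finset.range (N+1),
      (μ {ω | sInf (Ψ h ω '' Set.Ioo (a i) (b i))
        = sInf (Ψ h ω '' (Set.Ioo (a i) (b i))ᶜ)}).toReal)
      (nhdsWithin 0 (Set.Ioi 0)) (nhds 0) := by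
    have h0 : (0:ℝ) = ∑ i ∈ Finset.range (N+1), (0:ℝ) := by simp
    rw [h0]
    refine tendsto_finset_sum _ (fun i _ => ?_)
    obtain ⟨ht, hz⟩ := hb (a i) (b i) (hab i)
    rw [hz] at ht
    simpa using ht
  filter_upwards [self_mem_nhdsWithin, hsum.eventually_lt_const (by linarith : (0:ℝ) < δ/2)]
    with h hh hsumlt
  -- inclusion of events
  have hincl : {ω | ∃ s₁ ∈ minimizerSet (Ψ h ω), ∃ s₂ ∈ minimizerSet (Ψ h ω), ε < |s₁ - s₂|}
      ⊆ {ω | ¬ minimizerSet (Ψ h ω) ⊆ Set.Ioo (-(d/2)) (d/2)} ∪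
        ⋃ i ∈ Finset.range (N+1), {ω | sInf (Ψ h ω '' Set.Ioo (a i) (b i))
          = sInf (Ψ h ω '' (Set.Ioo (a i) (b i))ᶜ)} := by
    rintro ω ⟨s₁, hs₁, s₂, hs₂, hdist⟩
    by_cases hM : minimizerSet (Ψ h ω) ⊆ Set.Ioo (-(d/2)) (d/2)
    · right
      obtain ⟨i, hiN, hxi⟩ := cover_lemma hε (hM hs₁)
      refine Set.mem_biUnion (Finset.mem_range.2 (Nat.lt_succ_of_le hiN)) ?_
      refine sInf_eq_of_min_mem hs₁ hs₂ hxi ?_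
      intro hs₂mem
      obtain ⟨u1, u2⟩ := hxi
      obtain ⟨v1, v2⟩ := hs₂mem
      simp only [ha', hb'] at u1 u2 v1 v2
      have : |s₁ - s₂| < ε := abs_sub_lt_iff.mpr ⟨by linarith, by linarith⟩
      linarith
    · exact Or.inl hM
  have hmeas : (μ {ω | ∃ s₁ ∈ minimizerSet (Ψ h ω), ∃ s₂ ∈ minimizerSet (Ψ h ω),
        ε < |s₁ - s₂|}).toReal
      ≤ (μ {ω | ¬ minimizerSet (Ψ h ω) ⊆ Set.Ioo (-(d/2)) (d/2)}).toReal
        + ∑ i ∈ Finset.range (N+1), (μ {ω | sInf (Ψ h ω '' Set.Ioo (a i) (b i))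
          = sInf (Ψ h ω '' (Set.Ioo (a i) (b i))ᶜ)}).toReal := by
    have h1 : μ {ω | ∃ s₁ ∈ minimizerSet (Ψ h ω), ∃ s₂ ∈ minimizerSet (Ψ h ω), ε < |s₁ - s₂|}
        ≤ μ {ω | ¬ minimizerSet (Ψ h ω) ⊆ Set.Ioo (-(d/2)) (d/2)}
          + ∑ i ∈ Finset.range (N+1), μ {ω | sInf (Ψ h ω '' Set.Ioo (a i) (b i))
            = sInf (Ψ h ω '' (Set.Ioo (a i) (b i))ᶜ)} := by
      refine (measure_mono hincl).trans ((measure_union_le _ _).trans ?_)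
      gcongr
      exact measure_biUnion_finset_le _ _
    have hne : (∑ i ∈ Finset.range (N+1), μ {ω | sInf (Ψ h ω '' Set.Ioo (a i) (b i))
        = sInf (Ψ h ω '' (Set.Ioo (a i) (b i))ᶜ)}) ≠ ⊤ :=
      ENNReal.sum_ne_top.mpr (fun i _ => measure_ne_top μ _)
    calc _ ≤ (μ {ω | ¬ minimizerSet (Ψ h ω) ⊆ Set.Ioo (-(d/2)) (d/2)}
          + ∑ i ∈ Finset.range (N+1), μ {ω | sInf (Ψ h ω '' Set.Ioo (a i) (b i))
            = sInf (Ψ h ω '' (Set.Ioo (a i) (b i))ᶜ)}).toReal :=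
        ENNReal.toReal_mono (ENNReal.add_ne_top.mpr ⟨measure_ne_top μ _, hne⟩) h1
      _ = _ := by
        rw [ENNReal.toReal_add (measure_ne_top μ _) hne,
          ENNReal.toReal_sum (fun i _ => measure_ne_top μ _)]
  -- bound the first term by the sup
  have hL : (μ {ω | ¬ minimizerSet (Ψ h ω) ⊆ Set.Ioo (-(d/2)) (d/2)}).toReal
      ≤ ⨆ h' ∈ Set.Ioi (0:ℝ),
        (μ {ω | ¬ minimizerSet (Ψ h' ω) ⊆ Set.Ioo (-(d/2)) (d/2)}).toReal := by
    have hbdd : BddAbove (Set.range fun h' => ⨆ _ : h' ∈ Set.Ioi (0:ℝ),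
        (μ {ω | ¬ minimizerSet (Ψ h' ω) ⊆ Set.Ioo (-(d/2)) (d/2)}).toReal) := by
      refine ⟨1, ?_⟩
      rintro x ⟨h', rfl⟩
      exact Real.iSup_le (fun _ => htoReal_le_one _) zero_le_one
    calc (μ {ω | ¬ minimizerSet (Ψ h ω) ⊆ Set.Ioo (-(d/2)) (d/2)}).toReal
        = ⨆ _ : h ∈ Set.Ioi (0:ℝ),
          (μ {ω | ¬ minimizerSet (Ψ h ω) ⊆ Set.Ioo (-(d/2)) (d/2)}).toReal :=
          by rw [ciSup_pos hh]
      _ ≤ _ := le_ciSup hbdd h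
  rw [Real.dist_eq, sub_zero, abs_of_nonneg ENNReal.toReal_nonneg]
  calc (μ _).toReal ≤ _ := hmeas
    _ < δ/2 + δ/2 := by
        exact add_lt_add (hL.trans_lt hd) hsumlt
    _ = δ := by ring
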